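/- arXiv:1108.2581 — 2 statements merged into one kernel-verified Lean document; each statement's English description precedes it below -/
import Mathlib

section
/- Let H be a Hadamard matrix of order k and A = u³I − u⁻¹(J − I) with (u²+u⁻²)² = k, and let i be a primitive 4th root of unity. Then the matrix W̃' = [[A, A, H, −H], [A, A, −H, H], [iHᵀ, −iHᵀ, A, A], [−iHᵀ, iHᵀ, A, A]] satisfies the type II condition: ∑ₓ W̃'(a,x)/W̃'(b,x) = 4k·δ_{a,b}. -/
open Matrix Finset

noncomputable section

abbrev Idx (k : ℕ) := Fin k × ZMod 2 × ZMod 2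

/-- The Potts model `A = u³ I - u⁻¹ (J - I)`. -/
def potts (k : ℕ) (u : ℂ) : Matrix (Fin k) (Fin k) ℂ :=
  Matrix.of fun a b => if a = b then u ^ 3 else -u⁻¹

/-- `H` is a Hadamard matrix: entries `±1` with `H Hᵀ = k I`. -/
def IsHadamard {k : ℕ} (H : Matrix (Fin k) (Fin k) ℂ) : Prop :=
  (∀ a b, H a b = 1 ∨ H a b = -1) ∧ H * Hᵀ = (k : ℂ) • 1

/-- `(-1)^(a+b)` for `a b : ZMod 2`. -/
def sgn (a b : ZMod 2) : ℂ := if a = b then 1 else -1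

/-- `(-1)^s` for `s : ZMod 2`. -/
def pm (s : ZMod 2) : ℂ := if s = 0 then 1 else -1

/-- Normalized symmetric Hadamard model `W̃`, blocks indexed by `(ℤ/2)²`
in the order (0,0),(0,1),(1,0),(1,1). -/
def Wt {k : ℕ} (H : Matrix (Fin k) (Fin k) ℂ) (u : ℂ) : Matrix (Idx k) (Idx k) ℂ :=
  Matrix.of fun p q =>
    if p.2.1 = q.2.1 then potts k u p.1 q.1
    else if p.2.1 = 0 then sgn p.2.2 q.2.2 * H p.1 q.1
    else sgn p.2.2 q.2.2 * H q.1 p.1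

/-- Normalized nonsymmetric Hadamard model `W̃'` (with `im` a primitive 4th root of unity). -/
def Wtp {k : ℕ} (H : Matrix (Fin k) (Fin k) ℂ) (u im : ℂ) : Matrix (Idx k) (Idx k) ℂ :=
  Matrix.of fun p q =>
    if p.2.1 = q.2.1 then potts k u p.1 q.1
    else if p.2.1 = 0 then sgn p.2.2 q.2.2 * H p.1 q.1
    else im * sgn p.2.2 q.2.2 * H q.1 p.1

/-- Hadamard model `W` with 4th root of unity `ω`. -/
def Wom {k : ℕ} (H : Matrix (Fin k) (Fin k) ℂ) (u ω : ℂ) : Matrix (Idx k) (Idx k) ℂ :=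
  Matrix.of fun p q =>
    if p.2.1 = q.2.1 then potts k u p.1 q.1
    else if p.2.1 = 0 then ω * sgn p.2.2 q.2.2 * H p.1 q.1
    else ω * sgn p.2.2 q.2.2 * H q.1 p.1

/-- Nonsymmetric Hadamard model `W'` with primitive 8th root of unity `ξ`. -/
def Wp {k : ℕ} (H : Matrix (Fin k) (Fin k) ℂ) (u ξ : ℂ) : Matrix (Idx k) (Idx k) ℂ :=
  Matrix.of fun p q =>
    if p.2.1 = q.2.1 then potts k u p.1 q.1
    else if p.2.1 = 0 then ξ * sgn p.2.2 q.2.2 * H p.1 q.1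
    else -ξ * sgn p.2.2 q.2.2 * H q.1 p.1

/-- Distance matrices of the Hadamard graph. -/
def Amat0 (k : ℕ) : Matrix (Idx k) (Idx k) ℂ := 1

def Amat1 {k : ℕ} (H : Matrix (Fin k) (Fin k) ℂ) : Matrix (Idx k) (Idx k) ℂ :=
  Matrix.of fun p q =>
    if p.2.1 = q.2.1 then 0
    else if p.2.1 = 0 then (1 + sgn p.2.2 q.2.2 * H p.1 q.1) / 2
    else (1 + sgn p.2.2 q.2.2 * H q.1 p.1) / 2

def Amat2 (k : ℕ) : Matrix (Idx k) (Idx k) ℂ :=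
  Matrix.of fun p q => if p.2.1 = q.2.1 ∧ p.1 ≠ q.1 then 1 else 0

def Amat3 {k : ℕ} (H : Matrix (Fin k) (Fin k) ℂ) : Matrix (Idx k) (Idx k) ℂ :=
  Matrix.of fun p q =>
    if p.2.1 = q.2.1 then 0
    else if p.2.1 = 0 then (1 - sgn p.2.2 q.2.2 * H p.1 q.1) / 2
    else (1 - sgn p.2.2 q.2.2 * H q.1 p.1) / 2

def Amat4 (k : ℕ) : Matrix (Idx k) (Idx k) ℂ :=
  Matrix.of fun p q => if p.1 = q.1 ∧ p.2.1 = q.2.1 ∧ p.2.2 ≠ q.2.2 then 1 else 0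

/-- Adjacency matrix of the directed Hadamard graph. -/
def Amat1' {k : ℕ} (H : Matrix (Fin k) (Fin k) ℂ) : Matrix (Idx k) (Idx k) ℂ :=
  Matrix.of fun p q =>
    if p.2.1 = q.2.1 then 0
    else if p.2.1 = 0 then (1 + sgn p.2.2 q.2.2 * H p.1 q.1) / 2
    else (1 - sgn p.2.2 q.2.2 * H q.1 p.1) / 2

/-- The column vector `Y_{ab}^{αβ}` associated with a matrix `W`. -/
def Yvec {k : ℕ} (W : Matrix (Idx k) (Idx k) ℂ) (a : Fin k) (α : ZMod 2 × ZMod 2)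
    (b : Fin k) (β : ZMod 2 × ZMod 2) : Idx k → ℂ :=
  fun x => W x (a, α) / W x (b, β)

/-- The permutation `τ(α₁,α₂) = (α₁, α₁+α₂)` of `(ℤ/2)²`. -/
def tau : ZMod 2 × ZMod 2 → ZMod 2 × ZMod 2 := fun α => (α.1, α.1 + α.2)

/-- The relation `R₁` of the Hadamard graph scheme. -/
def RelR1 {k : ℕ} (H : Matrix (Fin k) (Fin k) ℂ) : Set (Idx k × Idx k) :=
  {pq | (pq.1.2.1 = 0 ∧ pq.2.2.1 = 1 ∧ H pq.1.1 pq.2.1 = pm (pq.1.2.2 + pq.2.2.2)) ∨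
        (pq.1.2.1 = 1 ∧ pq.2.2.1 = 0 ∧ H pq.2.1 pq.1.1 = pm (pq.1.2.2 + pq.2.2.2))}

/-- The relation `R₃` of the Hadamard graph scheme. -/
def RelR3 {k : ℕ} (H : Matrix (Fin k) (Fin k) ℂ) : Set (Idx k × Idx k) :=
  {pq | (pq.1.2.1 = 0 ∧ pq.2.2.1 = 1 ∧ H pq.1.1 pq.2.1 = pm (pq.1.2.2 + pq.2.2.2 + 1)) ∨
        (pq.1.2.1 = 1 ∧ pq.2.2.1 = 0 ∧ H pq.2.1 pq.1.1 = pm (pq.1.2.2 + pq.2.2.2 + 1))}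

/-- The relation `R'₁` of the directed Hadamard graph scheme. -/
def RelR1' {k : ℕ} (H : Matrix (Fin k) (Fin k) ℂ) : Set (Idx k × Idx k) :=
  {pq | (pq.1.2.1 = 0 ∧ pq.2.2.1 = 1 ∧ H pq.1.1 pq.2.1 = pm (pq.1.2.2 + pq.2.2.2)) ∨
        (pq.1.2.1 = 1 ∧ pq.2.2.1 = 0 ∧ H pq.2.1 pq.1.1 = pm (pq.1.2.2 + pq.2.2.2 + 1))}

/-- The relation `R'₃` of the directed Hadamard graph scheme. -/
def RelR3' {k : ℕ} (H : Matrix (Fin k) (Fin k) ℂ) : Set (Idx k × Idx k) :=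
  {pq | (pq.1.2.1 = 0 ∧ pq.2.2.1 = 1 ∧ H pq.1.1 pq.2.1 = pm (pq.1.2.2 + pq.2.2.2 + 1)) ∨
        (pq.1.2.1 = 1 ∧ pq.2.2.1 = 0 ∧ H pq.2.1 pq.1.1 = pm (pq.1.2.2 + pq.2.2.2))}

/-! `W̃'` is the block matrix `[[A, A, H, -H], [A, A, -H, H], [E, -E, A, A], [-E, E, A, A]]` with
`E = i Hᵀ`, and it is type II as soon as its blocks `A`, `H`, `E` are. For two rows in the same
block row the column blocks contribute `2 ∑ A/A + 2 (±1) ∑ H/H` (or `E/E`), that is `4k δ`; for rows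
in different block rows each column block carries a sign that flips between its two halves, so
the contributions cancel. The Potts block `A` is type II because `k = (u² + u⁻²)² = u⁴ + 2 + u⁻⁴`,
`H` because `H Hᵀ = k I`, and `E` because the transpose of a type II matrix is type II. -/

theorem ZMod.eq_zero_or_eq_one_of_two (z : ZMod 2) : z = 0 ∨ z = 1 := by
  revert z; decide

theorem sum_zmod_two {M : Type*} [AddCommMonoid M] (f : ZMod 2 → M) : ∑ t, f t = f 0 + f 1 :=
  Fin.sum_univ_two f

theorem sgn_mul_sgn (a b t : ZMod 2) : sgn a t * sgn b t = sgn a b := by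
  rcases a.eq_zero_or_eq_one_of_two with rfl | rfl <;>
  rcases b.eq_zero_or_eq_one_of_two with rfl | rfl <;>
  rcases t.eq_zero_or_eq_one_of_two with rfl | rfl <;> simp +decide [sgn]

theorem sgn_inv (a b : ZMod 2) : (sgn a b)⁻¹ = sgn a b := by
  unfold sgn; split_ifs <;> norm_num

theorem sgn_div_sgn (a b t : ZMod 2) : sgn a t / sgn b t = sgn a b := by
  rw [div_eq_mul_inv, sgn_inv, sgn_mul_sgn]

theorem div_sgn_mul (x y : ℂ) (a b : ZMod 2) : x / (sgn a b * y) = sgn a b * (x / y) := by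
  rw [div_eq_mul_inv, mul_inv, sgn_inv]; ring

theorem sum_sgn (a : ZMod 2) : ∑ t, sgn a t = 0 := by
  rcases a.eq_zero_or_eq_one_of_two with rfl | rfl <;> simp +decide [sgn, sum_zmod_two]

theorem sum_ite_eq_zmod_two {M : Type*} [AddCommMonoid M] (s : ZMod 2) (x y : M) :
    ∑ t, (if t = s then x else y) = x + y := by
  rcases s.eq_zero_or_eq_one_of_two with rfl | rfl <;> simp +decide [sum_zmod_two, add_comm]

section TypeII

variable {𝕜 n : Type*} [Field 𝕜] [Fintype n] [DecidableEq n]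

/-- Nonzero entries need not be required: as `x / 0 = 0`, the diagonal condition
`∑ x, M a x / M a x = card n` already forces them. -/
def IsTypeII (M : Matrix n n 𝕜) : Prop :=
  ∀ a b, ∑ x, M a x / M b x = if a = b then (Fintype.card n : 𝕜) else 0

theorem isTypeII_iff_mul_eq (M : Matrix n n 𝕜) :
    IsTypeII M ↔ M * (of fun x y => (M y x)⁻¹) = (Fintype.card n : 𝕜) • 1 := by
  simp only [IsTypeII, ← Matrix.ext_iff, mul_apply, of_apply, div_eq_mul_inv, Matrix.smul_apply,
    one_apply, smul_eq_mul, mul_ite, mul_one, mul_zero]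

theorem Matrix.mul_eq_smul_one_comm {A B : Matrix n n 𝕜} {c : 𝕜} (hc : c ≠ 0)
    (h : A * B = c • 1) : B * A = c • 1 := by
  have : A * (c⁻¹ • B) = 1 := by rw [Matrix.mul_smul, h, smul_smul, inv_mul_cancel₀ hc, one_smul]
  rw [← smul_right_inj (inv_ne_zero hc), ← Matrix.smul_mul, mul_eq_one_comm.1 this, smul_smul,
    inv_mul_cancel₀ hc, one_smul]

theorem IsTypeII.smul {M : Matrix n n 𝕜} (hM : IsTypeII M) {c : 𝕜} (hc : c ≠ 0) :
    IsTypeII (c • M) := by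
  intro a b
  simpa only [Matrix.smul_apply, smul_eq_mul, mul_div_mul_left _ _ hc] using hM a b

theorem IsTypeII.transpose [CharZero 𝕜] {M : Matrix n n 𝕜} (hM : IsTypeII M) :
    IsTypeII Mᵀ := by
  rw [isTypeII_iff_mul_eq] at hM ⊢
  cases isEmpty_or_nonempty n
  · exact Subsingleton.elim _ _
  have hc : (Fintype.card n : 𝕜) ≠ 0 := Nat.cast_ne_zero.2 Fintype.card_ne_zero
  have := congrArg Matrix.transpose (mul_eq_smul_one_comm hc hM)
  rwa [transpose_mul, transpose_smul, transpose_one] at this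

end TypeII

theorem IsHadamard.isTypeII {k : ℕ} {H : Matrix (Fin k) (Fin k) ℂ} (hH : _root_.IsHadamard H) :
    IsTypeII H := by
  intro a b
  have hinv : ∀ x, (H b x)⁻¹ = H b x := fun x => by rcases hH.1 b x with h | h <;> simp [h]
  simpa [div_eq_mul_inv, hinv, mul_apply, one_apply] using congr_fun₂ hH.2 a b

theorem potts_ne_zero {k : ℕ} {u : ℂ} (hu : u ≠ 0) (a b : Fin k) : potts k u a b ≠ 0 := by
  rw [potts, of_apply]; split_ifs <;> simp [hu]

theorem isTypeII_potts {k : ℕ} {u : ℂ} (hu : (u ^ 2 + (u ^ 2)⁻¹) ^ 2 = k) :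
    IsTypeII (potts k u) := by
  intro a b
  have hu0 : u ≠ 0 := by
    rintro rfl
    exact a.pos.ne' (by simpa using hu.symm)
  by_cases hab : a = b
  · simp [hab, div_self (potts_ne_zero hu0 _ _)]
  have ratio : ∀ x, potts k u a x / potts k u b x =
      1 + (if x = a then -u ^ 4 - 1 else 0) + (if x = b then -(u ^ 4)⁻¹ - 1 else 0) := by
    intro x
    by_cases hxa : x = a
    · subst hxa
      simp only [potts, of_apply, if_true, Ne.symm hab, hab, if_false, add_sub_cancel, add_zero]
      field_simp
    by_cases hxb : x = b
    · subst hxb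
      simp only [potts, of_apply, hab, hxa, if_true, if_false, add_zero, add_sub_cancel]
      field_simp
    · simp [potts, hxa, hxb, Ne.symm hxa, Ne.symm hxb, hu0]
  -- the off-diagonal sum vanishes because `k = (u² + u⁻²)² = u⁴ + 2 + u⁻⁴`
  simp only [ratio, sum_add_distrib, sum_ite_eq', mem_univ, if_true, sum_const, card_univ,
    Fintype.card_fin, nsmul_eq_mul, mul_one, hab, if_false]
  rw [← hu]
  field_simp
  ring

section SignedBlockMatrix

variable {n : Type*} [Fintype n]

/-- Index `(i, α, α')` is row/column `i` of block `2α + α'`; the matrix is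
`[[D, D, E 0, -E 0], [D, D, -E 0, E 0], [E 1, -E 1, D, D], [-E 1, E 1, D, D]]`. -/
def signedBlockMatrix (D : Matrix n n ℂ) (E : ZMod 2 → Matrix n n ℂ) :
    Matrix (n × ZMod 2 × ZMod 2) (n × ZMod 2 × ZMod 2) ℂ :=
  of fun p q => if p.2.1 = q.2.1 then D p.1 q.1 else sgn p.2.2 q.2.2 * E p.2.1 p.1 q.1

variable {D : Matrix n n ℂ} {E : ZMod 2 → Matrix n n ℂ}

theorem sum_signedBlockMatrix_div_of_ne {a b : n} {α β : ZMod 2} (hαβ : α ≠ β) (α' β' : ZMod 2) :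
    ∑ x, signedBlockMatrix D E (a, α, α') x / signedBlockMatrix D E (b, β, β') x = 0 := by
  rw [Fintype.sum_prod_type_right, Fintype.sum_prod_type]
  -- in each column block, one side carries the sign `sgn _ γ'`, which sums to zero over `γ'`
  refine sum_eq_zero fun γ _ => ?_
  simp only [signedBlockMatrix, of_apply]
  by_cases hγα : α = γ
  · subst hγα
    simp only [if_true, Ne.symm hαβ, if_false, div_sgn_mul, ← mul_sum, ← sum_mul, sum_sgn,
      zero_mul]
  · obtain rfl : β = γ := by revert α β γ; decide
    simp only [if_true, hγα, if_false, mul_div_assoc, ← mul_sum, ← sum_mul, sum_sgn, zero_mul]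

theorem sum_signedBlockMatrix_div_same [DecidableEq n] (hD : IsTypeII D)
    (hE : ∀ s, IsTypeII (E s)) (a b : n) (α α' β' : ZMod 2) :
    ∑ x, signedBlockMatrix D E (a, α, α') x / signedBlockMatrix D E (b, α, β') x =
      2 * (1 + sgn α' β') * if a = b then (Fintype.card n : ℂ) else 0 := by
  rw [Fintype.sum_prod_type_right, Fintype.sum_prod_type]
  simp only [signedBlockMatrix, of_apply]
  set δ : ℂ := if a = b then (Fintype.card n : ℂ) else 0
  calc _ = ∑ γ : ZMod 2, ∑ _γ' : ZMod 2, (if γ = α then δ else sgn α' β' * δ) := by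
        refine sum_congr rfl fun γ _ => sum_congr rfl fun γ' _ => ?_
        by_cases hγ : γ = α
        · simp only [hγ, if_true, hD a b, δ]
        · simp only [Ne.symm hγ, hγ, if_false, mul_div_mul_comm, sgn_div_sgn, ← mul_sum, hE α a b,
            δ]
    _ = 2 * (1 + sgn α' β') * δ := by
        simp only [sum_const, card_univ, ZMod.card, nsmul_eq_mul, ← mul_sum, sum_ite_eq_zmod_two]
        push_cast; ring

theorem IsTypeII.signedBlockMatrix [DecidableEq n] (hD : IsTypeII D) (hE : ∀ s, IsTypeII (E s)) :
    IsTypeII (signedBlockMatrix D E) := by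
  rintro ⟨a, α, α'⟩ ⟨b, β, β'⟩
  by_cases hαβ : α = β
  · subst hαβ
    rw [sum_signedBlockMatrix_div_same hD hE]
    rcases eq_or_ne α' β' with rfl | hα'
    · simp only [sgn, Fintype.card_prod, ZMod.card, Prod.ext_iff, if_true, and_true]
      split_ifs <;> push_cast <;> ring
    · simp [sgn, hα', Prod.ext_iff]
  · simp [sum_signedBlockMatrix_div_of_ne hαβ, hαβ]

end SignedBlockMatrix

theorem Wtp_eq_signedBlockMatrix {k : ℕ} (H : Matrix (Fin k) (Fin k) ℂ) (u im : ℂ) :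
    Wtp H u im = signedBlockMatrix (potts k u) (fun s => if s = 0 then H else im • Hᵀ) := by
  ext ⟨a, α, α'⟩ ⟨b, β, β'⟩
  simp only [Wtp, signedBlockMatrix, of_apply]
  split_ifs <;> simp [*, mul_assoc, mul_left_comm im]

/-- the normalized nonsymmetric Hadamard model `W̃'` is a type II matrix. -/
theorem nonsymHadamardModel_typeII (k : ℕ) (H : Matrix (Fin k) (Fin k) ℂ)
    (hH : _root_.IsHadamard H) (u : ℂ) (hu : (u ^ 2 + (u ^ 2)⁻¹) ^ 2 = (k : ℂ))
    (im : ℂ) (him : im ^ 2 = -1) :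
    ∀ a b : Idx k, ∑ x, Wtp H u im a x / Wtp H u im b x
      = ((4 * k : ℕ) : ℂ) * (if a = b then 1 else 0) := by
  have him0 : im ≠ 0 := by rintro rfl; norm_num at him
  have hW : IsTypeII (Wtp H u im) := by
    rw [Wtp_eq_signedBlockMatrix]
    refine (isTypeII_potts hu).signedBlockMatrix fun s => ?_
    split_ifs
    · exact hH.isTypeII
    · exact hH.isTypeII.transpose.smul him0
  intro a b
  simp [hW a b, Fintype.card_prod, mul_comm]
end
end

section
/- In the setting of the normalized Hadamard models W̃ and W̃' indexed by X × (ℤ/2ℤ)², if ((a,α),(b,β)) and ((a',α'),(b',β')) both lie in R₁ ∪ R₃ (equivalently, α₁ ≠ β₁ and α'₁ ≠ β'₁), then ⟨Y'^{τ(α)β}_{ab}, Y'^{τ(α')β'}_{a'b'}⟩ = (−1)^{α₁+α'₁} · ⟨Y^{αβ}_{ab}, Y^{α'β'}_{a'b'}⟩, where ⟨·,·⟩ is the Hermitian inner product and τ(α₁,α₂) = (α₁,α₁+α₂). -/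
open Matrix Finset

noncomputable section

/-
Away from the diagonal blocks, `W̃'` differs from `W̃` only by the factor `i` on the blocks of
rows with first block index `1` and columns with first block index `0`, and `τ` flips the sign of
the `H`-entries in the columns with first block index `1`. Hence, when `α₁ ≠ β₁`, the vector
`Y'^{τ(α)β}_{ab}` is `Y^{αβ}_{ab}` multiplied entrywise by `(-1)^{α₁}` and a unimodular factor
(`1` or `i`) that depends only on the block of the row, which cancels in the Hermitian product.
-/

lemma zmod_two_eq_zero_or_one : ∀ x : ZMod 2, x = 0 ∨ x = 1 := by decide

lemma sgn_one_add (a b : ZMod 2) : sgn a (1 + b) = -sgn a b := by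
  rcases zmod_two_eq_zero_or_one a with rfl | rfl <;>
    rcases zmod_two_eq_zero_or_one b with rfl | rfl <;> simp [sgn, CharTwo.add_self_eq_zero]

lemma pm_add (s t : ZMod 2) : pm (s + t) = pm s * pm t := by
  rcases zmod_two_eq_zero_or_one s with rfl | rfl <;>
    rcases zmod_two_eq_zero_or_one t with rfl | rfl <;> simp [pm, CharTwo.add_self_eq_zero]

lemma conj_pm (s : ZMod 2) : starRingEnd ℂ (pm s) = pm s := by
  unfold pm; split_ifs <;> simp

lemma fst_ne_fst_of_mem_RelR1_union_RelR3 {k : ℕ} {H : Matrix (Fin k) (Fin k) ℂ}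
    {a b : Fin k} {α β : ZMod 2 × ZMod 2} (h : ((a, α), (b, β)) ∈ RelR1 H ∪ RelR3 H) :
    α.1 ≠ β.1 := by
  rcases h with (⟨h₁, h₂, -⟩ | ⟨h₁, h₂, -⟩) | (⟨h₁, h₂, -⟩ | ⟨h₁, h₂, -⟩) <;>
    simp only at h₁ h₂ <;> rw [h₁, h₂] <;> decide

def blockPhase (im : ℂ) (g : ZMod 2) : ℂ := if g = 0 then 1 else im

lemma blockPhase_mul_conj {im : ℂ} (him : im ^ 2 = -1) (g : ZMod 2) :
    blockPhase im g * starRingEnd ℂ (blockPhase im g) = 1 := by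
  unfold blockPhase
  split_ifs
  · simp
  · rw [Complex.mul_conj, Complex.normSq_eq_norm_sq, ← norm_pow, him, norm_neg, norm_one]
    simp

lemma Yvec_Wtp_tau {k : ℕ} (H : Matrix (Fin k) (Fin k) ℂ) (u : ℂ) {im : ℂ} (him : im ^ 2 = -1)
    {a b : Fin k} {α β : ZMod 2 × ZMod 2} (hαβ : α.1 ≠ β.1) (x : Idx k) :
    Yvec (Wtp H u im) a (tau α) b β x
      = pm α.1 * blockPhase im x.2.1 * Yvec (Wt H u) a α b β x := by
  have him_inv : im⁻¹ = -im := inv_eq_of_mul_eq_one_right (by linear_combination -him)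
  obtain ⟨c, g, d⟩ := x
  obtain ⟨t, s⟩ := α
  obtain ⟨t', s'⟩ := β
  simp only [Yvec, Wtp, Wt, tau, blockPhase, pm, of_apply] at hαβ ⊢
  rcases zmod_two_eq_zero_or_one g with rfl | rfl <;>
    rcases zmod_two_eq_zero_or_one t with rfl | rfl <;>
    rcases zmod_two_eq_zero_or_one t' with rfl | rfl <;>
    simp [sgn_one_add, div_eq_mul_inv, him_inv] at hαβ ⊢ <;> ring

theorem Yvec_inner_product_general (k : ℕ) (H : Matrix (Fin k) (Fin k) ℂ)
    (u : ℂ)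
    (im : ℂ) (him : im ^ 2 = -1)
    (a b a' b' : Fin k) (α β α' β' : ZMod 2 × ZMod 2)
    (h : ((a, α), (b, β)) ∈ RelR1 H ∪ RelR3 H)
    (h' : ((a', α'), (b', β')) ∈ RelR1 H ∪ RelR3 H) :
    ∑ x, Yvec (Wtp H u im) a (tau α) b β x
        * starRingEnd ℂ (Yvec (Wtp H u im) a' (tau α') b' β' x)
      = pm (α.1 + α'.1)
        * ∑ x, Yvec (Wt H u) a α b β x
            * starRingEnd ℂ (Yvec (Wt H u) a' α' b' β' x) := by
  rw [Finset.mul_sum]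
  refine Finset.sum_congr rfl fun x _ => ?_
  rw [Yvec_Wtp_tau H u him (fst_ne_fst_of_mem_RelR1_union_RelR3 h),
    Yvec_Wtp_tau H u him (fst_ne_fst_of_mem_RelR1_union_RelR3 h'),
    map_mul, map_mul, conj_pm, pm_add]
  linear_combination pm α.1 * pm α'.1 * Yvec (Wt H u) a α b β x
    * starRingEnd ℂ (Yvec (Wt H u) a' α' b' β' x) * blockPhase_mul_conj him x.2.1

/-- for pairs in `R₁ ∪ R₃`, the Hermitian inner products of the
`τ`-shifted `Y'` vectors and of the `Y` vectors differ by `(-1)^{α₁+α'₁}`. -/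
theorem Yvec_inner_product (k : ℕ) (H : Matrix (Fin k) (Fin k) ℂ)
    (hH : _root_.IsHadamard H)
    (u : ℂ) (hu : (u ^ 2 + (u ^ 2)⁻¹) ^ 2 = (k : ℂ))
    (im : ℂ) (him : im ^ 2 = -1)
    (a b a' b' : Fin k) (α β α' β' : ZMod 2 × ZMod 2)
    (h : ((a, α), (b, β)) ∈ RelR1 H ∪ RelR3 H)
    (h' : ((a', α'), (b', β')) ∈ RelR1 H ∪ RelR3 H) :
    ∑ x, Yvec (Wtp H u im) a (tau α) b β x
        * starRingEnd ℂ (Yvec (Wtp H u im) a' (tau α') b' β' x)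
      = pm (α.1 + α'.1)
        * ∑ x, Yvec (Wt H u) a α b β x
            * starRingEnd ℂ (Yvec (Wt H u) a' α' b' β' x) :=
  Yvec_inner_product_general k H u im him a b a' b' α β α' β' h h'
end
end
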